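/- arXiv:2505.02585 — 6 statements merged into one kernel-verified Lean document; each statement's English description precedes it below -/
import Mathlib

section
/- Let q be an odd prime power with q ≡ 5 (mod 8), and let F(x) = x^((q+3)/2) - 3x^2 on F_q. Then for every nonzero a in F_q and every b in F_q, the equation F(x+a) - F(x) = b has at most 4 solutions x in F_q; i.e., the differential uniformity of F is at most 4. -/
/-- For `q ≡ 5 (mod 8)` and `F x = x^((q+3)/2) - 3 x^2`, every derivative equation
`F (x+a) - F x = b` with `a ≠ 0` has at most 4 solutions. -/
theorem stmt0 {K : Type*} [Field K] [Fintype K]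
    (h5 : Fintype.card K % 8 = 5)
    (a : K) (ha : a ≠ 0) (b : K) :
    ({x : K | (x + a) ^ ((Fintype.card K + 3) / 2) - 3 * (x + a) ^ 2
        - (x ^ ((Fintype.card K + 3) / 2) - 3 * x ^ 2) = b}).ncard ≤ 4 := by
  classical
  -- ## Generic facts about the field
  have hchar : ringChar K ≠ 2 := by
    intro h
    have h2 := FiniteField.even_card_of_char_two (F := K) h
    omega
  have h2 : (2 : K) ≠ 0 := Ring.two_ne_zero hchar
  have h1n : (1 : K) ≠ -1 := by
    intro h; apply h2; linear_combination h
  have hm0 : (-1 : K) ≠ 0 := by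
    intro h; exact one_ne_zero (α := K) (by linear_combination -h)
  obtain ⟨m, hm⟩ : ∃ m, Fintype.card K / 2 = m := ⟨_, rfl⟩
  have hexp : (Fintype.card K + 3) / 2 = m + 2 := by omega
  have hmne : m ≠ 0 := by omega
  have hmeven : Even m := ⟨Fintype.card K / 4, by omega⟩
  have hdich : ∀ z : K, z ≠ 0 → z ^ m = 1 ∨ z ^ m = -1 := by
    intro z hz
    have := FiniteField.pow_dichotomy hchar hz
    rwa [hm] at this
  have hsqiff : ∀ z : K, z ≠ 0 → (IsSquare z ↔ z ^ m = 1) := by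
    intro z hz
    have := FiniteField.isSquare_iff hchar hz
    rwa [hm] at this
  have hneg1m : (-1 : K) ^ m = 1 := hmeven.neg_one_pow
  have h2m : (2 : K) ^ m = -1 := by
    rcases hdich 2 h2 with h | h
    · exfalso
      have hsq2 : IsSquare (2 : K) := (hsqiff 2 h2).mpr h
      rw [FiniteField.isSquare_two_iff] at hsq2
      omega
    · exact h
  have h4 : (4 : K) ≠ 0 := by
    intro h; apply h2
    have h22 : (2:K)*2 = 0 := by linear_combination h
    rcases mul_eq_zero.mp h22 with h' | h' <;> exact h'
  have h8 : (8 : K) ≠ 0 := by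
    have hh := mul_ne_zero h2 h4
    intro h; apply hh; linear_combination h
  -- the character of `-2 a^2` is `-1`
  have hneg2a2 : ((-2)*a^2 : K)^m = -1 := by
    have hA : ((-2:K))^m = -1 := by
      have h' : ((-1:K)*2)^m = (-1:K)^m * 2^m := mul_pow _ _ _
      rw [hneg1m, one_mul, h2m] at h'
      rw [show ((-2):K) = (-1)*2 by ring]
      exact h'
    have hB : ((a:K)^2)^m = 1 := by
      rcases hdich a ha with hsa | hsa <;>
        · rw [← pow_mul, mul_comm, pow_mul, hsa]; norm_num
    rw [mul_pow, hA, hB, mul_one]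
  -- ## The solution set and its pieces
  set S := {x : K | (x + a) ^ ((Fintype.card K + 3) / 2) - 3 * (x + a) ^ 2
        - (x ^ ((Fintype.card K + 3) / 2) - 3 * x ^ 2) = b} with hSdef
  have hmem : ∀ x : K, x ∈ S ↔
      (x+a)^m * (x+a)^2 - 3*(x+a)^2 - (x^m * x^2 - 3*x^2) = b := by
    intro x
    rw [hSdef]
    simp only [Set.mem_setOf_eq, hexp, pow_add]
  -- equations satisfied in each sign class
  have eq1 : ∀ x : K, x ∈ S → x^m = 1 → (x+a)^m = 1 → -4*a*x - 2*a^2 = b := by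
    intro x hx hs ht
    have h := (hmem x).mp hx
    rw [hs, ht] at h
    linear_combination h
  have eq2 : ∀ x : K, x ∈ S → x^m = -1 → (x+a)^m = -1 → -8*a*x - 4*a^2 = b := by
    intro x hx hs ht
    have h := (hmem x).mp hx
    rw [hs, ht] at h
    linear_combination h
  have eq3 : ∀ x : K, x ∈ S → x^m = -1 → (x+a)^m = 1 → 2*x^2 - 4*a*x - 2*a^2 = b := by
    intro x hx hs ht
    have h := (hmem x).mp hx
    rw [hs, ht] at h
    linear_combination h
  have eq4 : ∀ x : K, x ∈ S → x^m = 1 → (x+a)^m = -1 → -2*x^2 - 8*a*x - 4*a^2 = b := by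
    intro x hx hs ht
    have h := (hmem x).mp hx
    rw [hs, ht] at h
    linear_combination h
  -- values of b coming from the special points 0 and -a
  have hb0 : (0:K) ∈ S → a^m * a^2 - 3*a^2 = b := by
    intro h
    have h' := (hmem 0).mp h
    rw [zero_add, zero_pow hmne] at h'
    linear_combination h'
  have hbma : (-a) ∈ S → -(a^m * a^2) + 3*a^2 = b := by
    intro h
    have h' := (hmem (-a)).mp h
    have hna : -a + a = 0 := by ring
    rw [hna, zero_pow hmne] at h'
    have hnam : (-a)^m = a^m := by rw [neg_pow, hneg1m, one_mul]
    rw [hnam] at h'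
    linear_combination h'
  set S0 : Set K := S ∩ {0, -a} with hS0def
  set S1 : Set K := {x | x ∈ S ∧ x^m = 1 ∧ (x+a)^m = 1} with hS1def
  set S2 : Set K := {x | x ∈ S ∧ x^m = -1 ∧ (x+a)^m = -1} with hS2def
  set S3 : Set K := {x | x ∈ S ∧ x^m = -1 ∧ (x+a)^m = 1} with hS3def
  set S4 : Set K := {x | x ∈ S ∧ x^m = 1 ∧ (x+a)^m = -1} with hS4def
  have hS1mem : ∀ x : K, x ∈ S1 ↔ (x ∈ S ∧ x^m = 1 ∧ (x+a)^m = 1) := by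
    intro x; rw [hS1def]; exact Iff.rfl
  have hS2mem : ∀ x : K, x ∈ S2 ↔ (x ∈ S ∧ x^m = -1 ∧ (x+a)^m = -1) := by
    intro x; rw [hS2def]; exact Iff.rfl
  have hS3mem : ∀ x : K, x ∈ S3 ↔ (x ∈ S ∧ x^m = -1 ∧ (x+a)^m = 1) := by
    intro x; rw [hS3def]; exact Iff.rfl
  have hS4mem : ∀ x : K, x ∈ S4 ↔ (x ∈ S ∧ x^m = 1 ∧ (x+a)^m = -1) := by
    intro x; rw [hS4def]; exact Iff.rfl
  -- ## Covering
  have hcover : S ⊆ S0 ∪ (S1 ∪ (S2 ∪ (S3 ∪ S4))) := by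
    intro x hx
    by_cases hx0 : x = 0 ∨ x = -a
    · refine Or.inl ?_
      rw [hS0def]
      exact ⟨hx, by simpa using hx0⟩
    · push_neg at hx0
      obtain ⟨hx1, hx2⟩ := hx0
      have hxa : x + a ≠ 0 := by
        intro h; apply hx2; linear_combination h
      rcases hdich x hx1 with hs | hs <;> rcases hdich (x+a) hxa with ht | ht
      · exact Or.inr (Or.inl ((hS1mem x).mpr ⟨hx, hs, ht⟩))
      · exact Or.inr (Or.inr (Or.inr (Or.inr ((hS4mem x).mpr ⟨hx, hs, ht⟩))))
      · exact Or.inr (Or.inr (Or.inr (Or.inl ((hS3mem x).mpr ⟨hx, hs, ht⟩))))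
      · exact Or.inr (Or.inr (Or.inl ((hS2mem x).mpr ⟨hx, hs, ht⟩)))
  have hcount : S.ncard ≤ S0.ncard + (S1.ncard + (S2.ncard + (S3 ∪ S4).ncard)) := by
    calc S.ncard ≤ (S0 ∪ (S1 ∪ (S2 ∪ (S3 ∪ S4)))).ncard :=
          Set.ncard_le_ncard hcover (Set.toFinite _)
      _ ≤ S0.ncard + (S1 ∪ (S2 ∪ (S3 ∪ S4))).ncard := Set.ncard_union_le _ _
      _ ≤ S0.ncard + (S1.ncard + (S2 ∪ (S3 ∪ S4)).ncard) :=
          Nat.add_le_add_left (Set.ncard_union_le _ _) _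
      _ ≤ S0.ncard + (S1.ncard + (S2.ncard + (S3 ∪ S4).ncard)) :=
          Nat.add_le_add_left (Nat.add_le_add_left (Set.ncard_union_le _ _) _) _
  -- ## S1, S2, S0 are subsingletons
  have hS1card : S1.ncard ≤ 1 := by
    rw [Set.ncard_le_one_iff (Set.toFinite _)]
    intro x y hx hy
    obtain ⟨hxS, hxm, hxam⟩ := (hS1mem x).mp hx
    obtain ⟨hyS, hym, hyam⟩ := (hS1mem y).mp hy
    have h := eq1 x hxS hxm hxam
    have h' := eq1 y hyS hym hyam
    have hz : (4*a)*(y - x) = 0 := by linear_combination h - h'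
    have h4a : (4:K)*a ≠ 0 := mul_ne_zero h4 ha
    have := (mul_eq_zero.mp hz).resolve_left h4a
    linear_combination -this
  have hS2card : S2.ncard ≤ 1 := by
    rw [Set.ncard_le_one_iff (Set.toFinite _)]
    intro x y hx hy
    obtain ⟨hxS, hxm, hxam⟩ := (hS2mem x).mp hx
    obtain ⟨hyS, hym, hyam⟩ := (hS2mem y).mp hy
    have h := eq2 x hxS hxm hxam
    have h' := eq2 y hyS hym hyam
    have hz : (8*a)*(y - x) = 0 := by linear_combination h - h'
    have h8a : (8:K)*a ≠ 0 := mul_ne_zero h8 ha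
    have := (mul_eq_zero.mp hz).resolve_left h8a
    linear_combination -this
  have hkey0 : ¬((0:K) ∈ S ∧ (-a) ∈ S) := by
    rintro ⟨hS0', hSa'⟩
    have hb1 := hb0 hS0'
    have hb2 := hbma hSa'
    rcases hdich a ha with hsa | hsa <;> rw [hsa] at hb1 hb2
    · have hz : (4:K)*(a*a) = 0 := by linear_combination hb2 - hb1
      rcases mul_eq_zero.mp hz with h' | h'
      · exact h4 h'
      · rcases mul_eq_zero.mp h' with h'' | h'' <;> exact ha h''
    · have hz : (8:K)*(a*a) = 0 := by linear_combination hb2 - hb1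
      rcases mul_eq_zero.mp hz with h' | h'
      · exact h8 h'
      · rcases mul_eq_zero.mp h' with h'' | h'' <;> exact ha h''
  have hS0card : S0.ncard ≤ 1 := by
    rw [Set.ncard_le_one_iff (Set.toFinite _)]
    intro x y hx hy
    rw [hS0def] at hx hy
    obtain ⟨hxS, hx0⟩ := hx
    obtain ⟨hyS, hy0⟩ := hy
    simp only [Set.mem_insert_iff, Set.mem_singleton_iff] at hx0 hy0
    rcases hx0 with rfl | rfl <;> rcases hy0 with rfl | rfl
    · rfl
    · exact absurd ⟨hxS, hyS⟩ hkey0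
    · exact absurd ⟨hyS, hxS⟩ hkey0
    · rfl
  -- nonzero-ness helpers from sign classes
  have hne_of_pow1 : ∀ z : K, z^m = 1 → z ≠ 0 := by
    intro z hz h0
    rw [h0, zero_pow hmne] at hz
    exact one_ne_zero (α := K) hz.symm
  have hne_of_powm1 : ∀ z : K, z^m = -1 → z ≠ 0 := by
    intro z hz h0
    rw [h0, zero_pow hmne] at hz
    exact hm0 hz.symm
  -- ## factoring lemmas for the quadratics
  have hfact3 : ∀ x y : K, x ∈ S3 → y ∈ S3 → y = x ∨ y = 2*a - x := by
    intro x y hx hy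
    obtain ⟨hxS, hxm, hxam⟩ := (hS3mem x).mp hx
    obtain ⟨hyS, hym, hyam⟩ := (hS3mem y).mp hy
    have h := eq3 x hxS hxm hxam
    have h' := eq3 y hyS hym hyam
    have hz : (2*(y - x))*((y + x) - 2*a) = 0 := by linear_combination h' - h
    rcases mul_eq_zero.mp hz with h0 | h0
    · rcases mul_eq_zero.mp h0 with h0 | h0
      · exact absurd h0 h2
      · exact Or.inl (by linear_combination h0)
    · exact Or.inr (by linear_combination h0)
  have hfact4 : ∀ x y : K, x ∈ S4 → y ∈ S4 → y = x ∨ y = -(4*a) - x := by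
    intro x y hx hy
    obtain ⟨hxS, hxm, hxam⟩ := (hS4mem x).mp hx
    obtain ⟨hyS, hym, hyam⟩ := (hS4mem y).mp hy
    have h := eq4 x hxS hxm hxam
    have h' := eq4 y hyS hym hyam
    have hz : (2*(y - x))*((y + x) + 4*a) = 0 := by linear_combination h - h'
    rcases mul_eq_zero.mp hz with h0 | h0
    · rcases mul_eq_zero.mp h0 with h0 | h0
      · exact absurd h0 h2
      · exact Or.inl (by linear_combination h0)
    · exact Or.inr (by linear_combination h0)
  -- ## generic bounds on S3, S4
  have hS3card : S3.ncard ≤ 2 := by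
    rcases Set.eq_empty_or_nonempty S3 with he | ⟨x0, hx0⟩
    · rw [he]; simp
    · have hsub3 : S3 ⊆ {x0, 2*a - x0} := by
        intro y hy
        rcases hfact3 x0 y hx0 hy with h | h
        · exact Or.inl h
        · exact Or.inr h
      calc S3.ncard ≤ ({x0, 2*a - x0} : Set K).ncard :=
            Set.ncard_le_ncard hsub3 (Set.toFinite _)
        _ ≤ 2 := by
            refine le_trans (Set.ncard_insert_le _ _) ?_
            simp
  have hS4card : S4.ncard ≤ 2 := by
    rcases Set.eq_empty_or_nonempty S4 with he | ⟨x0, hx0⟩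
    · rw [he]; simp
    · have hsub4 : S4 ⊆ {x0, -(4*a) - x0} := by
        intro y hy
        rcases hfact4 x0 y hx0 hy with h | h
        · exact Or.inl h
        · exact Or.inr h
      calc S4.ncard ≤ ({x0, -(4*a) - x0} : Set K).ncard :=
            Set.ncard_le_ncard hsub4 (Set.toFinite _)
        _ ≤ 2 := by
            refine le_trans (Set.ncard_insert_le _ _) ?_
            simp
  -- ## S3 and S4 cannot both be nonempty
  have hL1 : ∀ x y : K, x ∈ S3 → y ∈ S4 → False := by
    intro x y hx hy
    obtain ⟨hxS, hxm, hxam⟩ := (hS3mem x).mp hx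
    obtain ⟨hyS, hym, hyam⟩ := (hS4mem y).mp hy
    have h3 := eq3 x hxS hxm hxam
    have h4' := eq4 y hyS hym hyam
    have hxa0 : x + a ≠ 0 := hne_of_pow1 _ hxam
    have hy0 : y ≠ 0 := hne_of_pow1 _ hym
    obtain ⟨i, hi⟩ : IsSquare (-1 : K) := by
      rw [FiniteField.isSquare_neg_one_iff]; omega
    have hcirc : (x-a)^2 + (y+2*a)^2 - 4*a^2 = 0 := by
      have h2c : (2:K) * ((x-a)^2 + (y+2*a)^2 - 4*a^2) = 0 := by
        linear_combination h3 - h4'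
      exact (mul_eq_zero.mp h2c).resolve_left h2
    have hWne : (x - a) + i*(y + 2*a) ≠ 0 := by
      intro h0
      apply ha
      have h4a : (4:K)*(a*a) = 0 := by
        linear_combination (-1 : K)*hcirc + ((x-a) - i*(y+2*a))*h0 + (-(y+2*a)^2)*hi
      rcases mul_eq_zero.mp h4a with h' | h'
      · exact absurd h' h4
      · rcases mul_eq_zero.mp h' with h'' | h'' <;> exact h''
    have key1 : 2*((x - a) + i*(y + 2*a))*(x+a) = (((x - a) + i*(y + 2*a)) + 2*a)^2 := by
      linear_combination hcirc + (y+2*a)^2*hi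
    have key2 : 2*i*((x - a) + i*(y + 2*a))*y = (((x - a) + i*(y + 2*a)) - 2*a*i)^2 := by
      linear_combination -hcirc - ((y+2*a)^2 - 4*a^2)*hi
    have hsq_xa : IsSquare (x+a) := (hsqiff _ hxa0).mpr hxam
    have hsq_y : IsSquare y := (hsqiff _ hy0).mpr hym
    have e1 : IsSquare (2*((x - a) + i*(y + 2*a))*(x+a)) :=
      ⟨((x - a) + i*(y + 2*a)) + 2*a, by linear_combination key1⟩
    have e3 : IsSquare (2*((x - a) + i*(y + 2*a))) := by
      have hh := e1.mul hsq_xa.inv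
      rwa [show 2*((x - a) + i*(y + 2*a))*(x+a) * (x+a)⁻¹
          = 2*((x - a) + i*(y + 2*a)) by field_simp] at hh
    have e2 : IsSquare (2*i*((x - a) + i*(y + 2*a))*y) :=
      ⟨((x - a) + i*(y + 2*a)) - 2*a*i, by linear_combination key2⟩
    have e4 : IsSquare (2*i*((x - a) + i*(y + 2*a))) := by
      have hh := e2.mul hsq_y.inv
      rwa [show 2*i*((x - a) + i*(y + 2*a))*y * y⁻¹
          = 2*i*((x - a) + i*(y + 2*a)) by field_simp] at hh
    have h2W : (2*((x - a) + i*(y + 2*a)) : K) ≠ 0 := mul_ne_zero h2 hWne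
    have e5 : IsSquare i := by
      have hh := e4.mul e3.inv
      rwa [show 2*i*((x - a) + i*(y + 2*a)) * (2*((x - a) + i*(y + 2*a)))⁻¹
          = i by field_simp] at hh
    obtain ⟨c0, hc0⟩ := e5
    have hc4 : c0^4 = -1 := by
      rw [hc0] at hi
      linear_combination -hi
    have hc0ne : c0 ≠ 0 := by
      intro h
      rw [h] at hc4
      exact hm0 (by linear_combination -hc4)
    have hq1 : Fintype.card K - 1 = 8 * ((Fintype.card K - 1)/8) + 4 := by omega
    have hpow : c0 ^ (Fintype.card K - 1) = 1 :=
      FiniteField.pow_card_sub_one_eq_one c0 hc0ne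
    rw [hq1, pow_add, pow_mul] at hpow
    have hc8 : c0^8 = 1 := by linear_combination (c0^4 - 1)*hc4
    rw [hc8, one_pow, one_mul, hc4] at hpow
    exact h1n hpow.symm
  have hL1' : S3 = ∅ ∨ S4 = ∅ := by
    by_contra hcon
    push_neg at hcon
    obtain ⟨h3ne, h4ne⟩ := hcon
    obtain ⟨x, hx⟩ := h3ne
    obtain ⟨y, hy⟩ := h4ne
    exact hL1 x y hx hy
  have hS34 : (S3 ∪ S4).ncard ≤ 2 := by
    rcases hL1' with h | h
    · rw [h, Set.empty_union]; exact hS4card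
    · rw [h, Set.union_empty]; exact hS3card
  -- ## if a special point is a solution, S3 and S4 are subsingletons
  have hspecS3 : ((0:K) ∈ S ∨ (-a) ∈ S) → S3.ncard ≤ 1 := by
    intro hsp
    rw [Set.ncard_le_one_iff (Set.toFinite _)]
    intro x y hx hy
    obtain ⟨hxS, hxm, hxam⟩ := (hS3mem x).mp hx
    obtain ⟨hyS, hym, hyam⟩ := (hS3mem y).mp hy
    have h := eq3 x hxS hxm hxam
    have h' := eq3 y hyS hym hyam
    have hx0 : x ≠ 0 := hne_of_powm1 _ hxm
    have hy0 : y ≠ 0 := hne_of_powm1 _ hym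
    have hxa0 : x + a ≠ 0 := hne_of_pow1 _ hxam
    have hya0 : y + a ≠ 0 := hne_of_pow1 _ hyam
    rcases hsp with hsp | hsp
    · have hb' := hb0 hsp
      rcases hdich a ha with hsa | hsa <;> rw [hsa] at hb'
      · have solve : ∀ z : K, z ≠ 0 → 2*z^2 - 4*a*z - 2*a^2 = b → z = 2*a := by
          intro z hz hzq
          have hzz : (2*z)*(z - 2*a) = 0 := by linear_combination hzq - hb'
          rcases mul_eq_zero.mp hzz with h1 | h1
          · rcases mul_eq_zero.mp h1 with h1 | h1
            · exact absurd h1 h2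
            · exact absurd h1 hz
          · linear_combination h1
        rw [solve x hx0 h, solve y hy0 h']
      · have solve : ∀ z : K, 2*z^2 - 4*a*z - 2*a^2 = b → z = a := by
          intro z hzq
          have hzz : (2*(z - a))*(z - a) = 0 := by linear_combination hzq - hb'
          rcases mul_eq_zero.mp hzz with h1 | h1
          · rcases mul_eq_zero.mp h1 with h1 | h1
            · exact absurd h1 h2
            · linear_combination h1
          · linear_combination h1
        rw [solve x h, solve y h']
    · have hb' := hbma hsp
      rcases hdich a ha with hsa | hsa <;> rw [hsa] at hb'
      · rcases hfact3 x y hx hy with hxy | hxy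
        · exact hxy.symm
        · exfalso
          have hxy2 : x*y = (-2)*a^2 := by
            have h2z : (2:K) * (x*y - (-2)*a^2) = 0 := by
              linear_combination 2*x*hxy - (h - hb')
            have := (mul_eq_zero.mp h2z).resolve_left h2
            linear_combination this
          have hchm : (x*y)^m = 1 := by
            rw [mul_pow, hxm, hym]; norm_num
          rw [hxy2, hneg2a2] at hchm
          exact h1n hchm.symm
      · have solve : ∀ z : K, z + a ≠ 0 → 2*z^2 - 4*a*z - 2*a^2 = b → z = 3*a := by
          intro z hza hzq
          have hzz : (2*(z - 3*a))*(z + a) = 0 := by linear_combination hzq - hb'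
          rcases mul_eq_zero.mp hzz with h1 | h1
          · rcases mul_eq_zero.mp h1 with h1 | h1
            · exact absurd h1 h2
            · linear_combination h1
          · exact absurd h1 hza
        rw [solve x hxa0 h, solve y hya0 h']
  have hspecS4 : ((0:K) ∈ S ∨ (-a) ∈ S) → S4.ncard ≤ 1 := by
    intro hsp
    rw [Set.ncard_le_one_iff (Set.toFinite _)]
    intro x y hx hy
    obtain ⟨hxS, hxm, hxam⟩ := (hS4mem x).mp hx
    obtain ⟨hyS, hym, hyam⟩ := (hS4mem y).mp hy
    have h := eq4 x hxS hxm hxam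
    have h' := eq4 y hyS hym hyam
    have hx0 : x ≠ 0 := hne_of_pow1 _ hxm
    have hy0 : y ≠ 0 := hne_of_pow1 _ hym
    have hxa0 : x + a ≠ 0 := hne_of_powm1 _ hxam
    have hya0 : y + a ≠ 0 := hne_of_powm1 _ hyam
    rcases hsp with hsp | hsp
    · have hb' := hb0 hsp
      rcases hdich a ha with hsa | hsa <;> rw [hsa] at hb'
      · rcases hfact4 x y hx hy with hxy | hxy
        · exact hxy.symm
        · exfalso
          have hxy2 : (x+a)*(y+a) = (-2)*a^2 := by
            have h2z : (2:K) * ((x+a)*(y+a) - (-2)*a^2) = 0 := by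
              linear_combination 2*(x+a)*hxy + (h - hb')
            have := (mul_eq_zero.mp h2z).resolve_left h2
            linear_combination this
          have hchm : ((x+a)*(y+a))^m = 1 := by
            rw [mul_pow, hxam, hyam]; norm_num
          rw [hxy2, hneg2a2] at hchm
          exact h1n hchm.symm
      · have solve : ∀ z : K, z ≠ 0 → -2*z^2 - 8*a*z - 4*a^2 = b → z = -(4*a) := by
          intro z hz hzq
          have hzz : ((-2)*z)*(z + 4*a) = 0 := by linear_combination hzq - hb'
          rcases mul_eq_zero.mp hzz with h1 | h1
          · rcases mul_eq_zero.mp h1 with h1 | h1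
            · exact absurd (by linear_combination -h1 : (2:K) = 0) h2
            · exact absurd h1 hz
          · linear_combination h1
        rw [solve x hx0 h, solve y hy0 h']
    · have hb' := hbma hsp
      rcases hdich a ha with hsa | hsa <;> rw [hsa] at hb'
      · have solve : ∀ z : K, z + a ≠ 0 → -2*z^2 - 8*a*z - 4*a^2 = b → z = -(3*a) := by
          intro z hza hzq
          have hzz : ((-2)*(z + 3*a))*(z + a) = 0 := by linear_combination hzq - hb'
          rcases mul_eq_zero.mp hzz with h1 | h1
          · rcases mul_eq_zero.mp h1 with h1 | h1
            · exact absurd (by linear_combination -h1 : (2:K) = 0) h2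
            · linear_combination h1
          · exact absurd h1 hza
        rw [solve x hxa0 h, solve y hya0 h']
      · have solve : ∀ z : K, -2*z^2 - 8*a*z - 4*a^2 = b → z = -(2*a) := by
          intro z hzq
          have hzz : ((-2)*(z + 2*a))*(z + 2*a) = 0 := by linear_combination hzq - hb'
          rcases mul_eq_zero.mp hzz with h1 | h1
          · rcases mul_eq_zero.mp h1 with h1 | h1
            · exact absurd (by linear_combination -h1 : (2:K) = 0) h2
            · linear_combination h1
          · linear_combination h1
        rw [solve x h, solve y h']
  -- ## final counting
  by_cases hsp : (0:K) ∈ S ∨ (-a) ∈ S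
  · have h3' := hspecS3 hsp
    have h4' := hspecS4 hsp
    have h34 : (S3 ∪ S4).ncard ≤ 1 := by
      rcases hL1' with h | h
      · rw [h, Set.empty_union]; exact h4'
      · rw [h, Set.union_empty]; exact h3'
    omega
  · have hS0empty : S0 = ∅ := by
      rw [hS0def]
      ext z
      simp only [Set.mem_inter_iff, Set.mem_insert_iff, Set.mem_singleton_iff,
        Set.mem_empty_iff_false, iff_false, not_and]
      rintro hzS (rfl | rfl)
      · exact hsp (Or.inl hzS)
      · exact hsp (Or.inr hzS)
    rw [hS0empty] at hcount
    simp only [Set.ncard_empty] at hcount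
    omega
end

section
/- Let q be an odd prime power, u ∈ F_q with u ∉ {0, 1, -1}, and F(x) = x^((q+3)/2) + u·x^2 on F_q. Fix a ∈ F_q* and b ∈ F_q. If x ∈ F_q satisfies F(x+a) - F(x) = b, and both x and x+a are nonsquares in F_q, then x = (b - (u-1)a^2) / (2a(u-1)). -/
/-!
On nonsquares `y` Euler's criterion gives `y ^ ((q-1)/2) = -1`, so `F y = (u - 1) y ^ 2`.
Hence if `x` and `x + a` are both nonsquares, `F (x + a) - F x = (u - 1) (2 a x + a ^ 2)`,
which is linear in `x` with nonzero slope `2 a (u - 1)`.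
-/

namespace FiniteField

variable {K : Type*} [Field K] [Fintype K]

theorem ringChar_ne_two_of_odd_card (hodd : Odd (Fintype.card K)) : ringChar K ≠ 2 := fun h ↦
  Nat.not_even_iff_odd.mpr hodd (Nat.even_iff.mpr (even_card_of_char_two h))

theorem pow_card_div_two_eq_neg_one_of_not_isSquare (hK : ringChar K ≠ 2) {y : K}
    (hy : ¬IsSquare y) : y ^ (Fintype.card K / 2) = -1 := by
  have hy0 : y ≠ 0 := by rintro rfl; exact hy IsSquare.zero
  exact (pow_dichotomy hK hy0).resolve_left fun h ↦ hy ((isSquare_iff hK hy0).mpr h)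

theorem pow_card_add_three_div_two_of_not_isSquare (hodd : Odd (Fintype.card K)) {y : K}
    (hy : ¬IsSquare y) : y ^ ((Fintype.card K + 3) / 2) = -y ^ 2 := by
  have hexp : (Fintype.card K + 3) / 2 = Fintype.card K / 2 + 2 := by
    obtain ⟨k, hk⟩ := hodd
    omega
  rw [hexp, pow_add,
    pow_card_div_two_eq_neg_one_of_not_isSquare (ringChar_ne_two_of_odd_card hodd) hy, neg_one_mul]

end FiniteField

theorem stmt4_general {K : Type*} [Field K] [Fintype K] (hodd : Odd (Fintype.card K))
    (u : K) (hu1 : u ≠ 1)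
    (a : K) (ha : a ≠ 0) (b x : K)
    (hx : ¬ IsSquare x) (hxa : ¬ IsSquare (x + a))
    (heq : (x + a) ^ ((Fintype.card K + 3) / 2) + u * (x + a) ^ 2
        - (x ^ ((Fintype.card K + 3) / 2) + u * x ^ 2) = b) :
    x = (b - (u - 1) * a ^ 2) / (2 * a * (u - 1)) := by
  rw [FiniteField.pow_card_add_three_div_two_of_not_isSquare hodd hx,
    FiniteField.pow_card_add_three_div_two_of_not_isSquare hodd hxa] at heq
  have h2 : (2 : K) ≠ 0 := Ring.two_ne_zero (FiniteField.ringChar_ne_two_of_odd_card hodd)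
  rw [eq_div_iff (mul_ne_zero (mul_ne_zero h2 ha) (sub_ne_zero.mpr hu1))]
  linear_combination heq

/-- Case `C_{-1,-1}`: if `x` and `x + a` are nonsquares and
`F(x+a) - F(x) = b` for `F x = x^((q+3)/2) + u x^2`, then
`x = (b - (u-1) a^2) / (2 a (u-1))`. -/
theorem stmt4 {K : Type*} [Field K] [Fintype K] (hodd : Odd (Fintype.card K))
    (u : K) (hu0 : u ≠ 0) (hu1 : u ≠ 1) (hum1 : u ≠ -1)
    (a : K) (ha : a ≠ 0) (b x : K)
    (hx : ¬ IsSquare x) (hxa : ¬ IsSquare (x + a))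
    (heq : (x + a) ^ ((Fintype.card K + 3) / 2) + u * (x + a) ^ 2
        - (x ^ ((Fintype.card K + 3) / 2) + u * x ^ 2) = b) :
    x = (b - (u - 1) * a ^ 2) / (2 * a * (u - 1)) :=
  stmt4_general hodd u hu1 a ha b x hx hxa heq
end

section
/- Let q = p^n with p an odd prime, and let L(x) = x^(p^r) + γx with γ ∈ F_q*. Let d = gcd(n, r). Then L is a permutation of F_q if and only if (-1)^(n/d) · γ^((p^n - 1)/(p^d - 1)) ≠ 1. -/
/-! `L` is additive, so it is bijective iff its kernel is trivial, i.e. iff `-γ` is not a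
`(p^r - 1)`-th power in the cyclic group `F_q^*` of order `p^n - 1`. As
`gcd (p^n - 1) (p^r - 1) = p^d - 1`, this says `(-γ)^((p^n - 1)/(p^d - 1)) ≠ 1`. Finally
`(p^n - 1)/(p^d - 1) = ∑_{i < n/d} p^(d i)` and `(-1)^(p^k) = -1` in characteristic `p`, so the
sign contributes `(-1)^(n/d)`. -/

theorem IsCyclic.mem_range_powMonoidHom_iff {G : Type*} [CommGroup G] [IsCyclic G] [Finite G]
    (m : ℕ) (u : G) :
    u ∈ (powMonoidHom m : G →* G).range ↔ u ^ (Nat.card G / (Nat.card G).gcd m) = 1 := by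
  set k := Nat.card G / (Nat.card G).gcd m
  have hk : (Nat.card G).gcd k = k :=
    Nat.gcd_eq_right (Nat.div_dvd_of_dvd (Nat.gcd_dvd_left _ _))
  have hle : (powMonoidHom m : G →* G).range ≤ (powMonoidHom k : G →* G).ker := by
    rintro _ ⟨v, rfl⟩
    have hdvd : Nat.card G ∣ m * k := by
      rw [← Nat.mul_div_assoc _ (Nat.gcd_dvd_left _ _), Nat.mul_comm,
        Nat.mul_div_assoc _ (Nat.gcd_dvd_right _ _)]
      exact Nat.dvd_mul_right _ _
    simp only [MonoidHom.mem_ker, powMonoidHom_apply, ← pow_mul]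
    exact orderOf_dvd_iff_pow_eq_one.mp ((orderOf_dvd_natCard v).trans hdvd)
  have heq := Subgroup.eq_of_le_of_card_ge hle <| by
    rw [IsCyclic.card_powMonoidHom_range, IsCyclic.card_powMonoidHom_ker, hk]
  rw [heq, MonoidHom.mem_ker, powMonoidHom_apply]

theorem FiniteField.exists_ne_zero_pow_eq_iff {K : Type*} [Field K] [Fintype K] (m : ℕ) (c : K) :
    (∃ x : K, x ≠ 0 ∧ x ^ m = c) ↔
      c ^ ((Fintype.card K - 1) / (Fintype.card K - 1).gcd m) = 1 := by
  classical
  rcases eq_or_ne c 0 with rfl | hc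
  · have hq : 0 < Fintype.card K - 1 := by
      rw [← Fintype.card_units]; exact Fintype.card_pos
    have hk : (Fintype.card K - 1) / (Fintype.card K - 1).gcd m ≠ 0 :=
      (Nat.div_pos (Nat.gcd_le_left _ hq) (Nat.gcd_pos_of_pos_left _ hq)).ne'
    simp [hk]
  · lift c to Kˣ using hc.isUnit
    rw [← Nat.card_eq_fintype_card, ← Nat.card_units, ← Units.val_pow_eq_pow_val,
      Units.val_eq_one, ← IsCyclic.mem_range_powMonoidHom_iff]
    constructor
    · rintro ⟨x, hx, hxc⟩
      exact ⟨Units.mk0 x hx, Units.ext hxc⟩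
    · rintro ⟨v, rfl⟩
      exact ⟨v, v.ne_zero, rfl⟩

theorem pow_add_mul_eq_zero_iff {R : Type*} [Ring R] [NoZeroDivisors R] {k : ℕ} (hk : k ≠ 0)
    {x : R} (hx : x ≠ 0) (γ : R) : x ^ k + γ * x = 0 ↔ x ^ (k - 1) = -γ := by
  obtain ⟨k, rfl⟩ := Nat.exists_eq_succ_of_ne_zero hk
  rw [Nat.succ_sub_one, pow_succ, ← add_mul, mul_eq_zero, or_iff_left hx, add_eq_zero_iff_eq_neg]

theorem bijective_pow_expChar_pow_add_mul_iff {K : Type*} [Field K] [Finite K] (p : ℕ)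
    [ExpChar K p] (r : ℕ) (γ : K) :
    Function.Bijective (fun x : K => x ^ p ^ r + γ * x) ↔
      ¬ ∃ x : K, x ≠ 0 ∧ x ^ (p ^ r - 1) = -γ := by
  let L : K →+ K := (iterateFrobenius K p r).toAddMonoidHom + AddMonoidHom.mulLeft γ
  have hpr : p ^ r ≠ 0 := pow_ne_zero _ (expChar_ne_zero K p)
  change Function.Bijective L ↔ _
  rw [← Finite.injective_iff_bijective, injective_iff_map_eq_zero]
  simp only [not_exists, not_and]
  refine forall_congr' fun x => ?_
  by_cases hx : x = 0
  · simp [hx]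
  · simp [L, hx, iterateFrobenius_def, pow_add_mul_eq_zero_iff hpr hx]

theorem neg_one_pow_pow_sub_one_div_pow_sub_one {R : Type*} [CommRing R] {p : ℕ} [ExpChar R p]
    (hp : 1 < p) {d n : ℕ} (hd : d ∣ n) :
    (-1 : R) ^ ((p ^ n - 1) / (p ^ d - 1)) = (-1) ^ (n / d) := by
  obtain ⟨k, rfl⟩ := hd
  rcases Nat.eq_zero_or_pos d with rfl | hd
  · simp
  rw [pow_mul, ← Nat.geomSum_eq (Nat.one_lt_pow hd.ne' hp) k, ← Finset.prod_pow_eq_pow_sum,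
    Nat.mul_div_cancel_left _ hd]
  simp [← pow_mul, neg_one_pow_expChar_pow]

theorem stmt9_general {K : Type*} [Field K] [Fintype K] (p n r : ℕ) (hp : p.Prime)
    (hcard : Fintype.card K = p ^ n) (γ : K) :
    Function.Bijective (fun x : K => x ^ p ^ r + γ * x) ↔
      (-1 : K) ^ (n / Nat.gcd n r) * γ ^ ((p ^ n - 1) / (p ^ Nat.gcd n r - 1)) ≠ 1 := by
  have : Fact p.Prime := ⟨hp⟩
  have : CharP K p := charP_of_card_eq_prime_pow hcard
  rw [bijective_pow_expChar_pow_add_mul_iff, FiniteField.exists_ne_zero_pow_eq_iff, hcard,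
    Nat.pow_sub_one_gcd_pow_sub_one, neg_eq_neg_one_mul, mul_pow,
    neg_one_pow_pow_sub_one_div_pow_sub_one hp.one_lt (Nat.gcd_dvd_left n r)]

/-- Criterion for the linearized binomial `x ↦ x^(p^r) + γ x` to permute `F_{p^n}`. -/
theorem stmt9 {K : Type*} [Field K] [Fintype K] (p n r : ℕ) (hp : p.Prime) (hpodd : Odd p)
    (hcard : Fintype.card K = p ^ n) (γ : K) (hγ : γ ≠ 0) :
    Function.Bijective (fun x : K => x ^ p ^ r + γ * x) ↔
      (-1 : K) ^ (n / Nat.gcd n r) * γ ^ ((p ^ n - 1) / (p ^ Nat.gcd n r - 1)) ≠ 1 :=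
  stmt9_general p n r hp hcard γ
end

section
/- Let q = p^n with p an odd prime, let k < n, set d = gcd(n, 2k), and suppose n/d is odd. Then the map z ↦ z^(p^(2k)) + z is a permutation of F_q; in particular its only root is z = 0. -/
/-- If `n / gcd(n, 2k)` is odd, then `z ↦ z^(p^(2k)) + z` permutes `F_{p^n}`,
and its only root is `0`. -/
theorem stmt10 {K : Type*} [Field K] [Fintype K] (p n k : ℕ) (hp : p.Prime) (hpodd : Odd p)
    (hcard : Fintype.card K = p ^ n) (hk : k < n)
    (hodd : Odd (n / Nat.gcd n (2 * k))) :
    Function.Bijective (fun z : K => z ^ p ^ (2 * k) + z) ∧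
      ∀ z : K, z ^ p ^ (2 * k) + z = 0 → z = 0 := by
  -- char K = p
  have hn : 0 < n := Nat.lt_of_le_of_lt (Nat.zero_le k) hk
  haveI : CharP K (ringChar K) := ringChar.charP K
  have hrp : (ringChar K).Prime := CharP.char_is_prime K (ringChar K)
  obtain ⟨m', hm'⟩ := FiniteField.card K (ringChar K)
  have hrep : ringChar K = p := by
    have h1 : p ∣ (ringChar K) ^ (m' : ℕ) := by
      rw [← hm'.2, hcard]
      exact dvd_pow_self p hn.ne'
    have h2 : p ∣ ringChar K := hp.dvd_of_dvd_pow h1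
    exact ((Nat.prime_dvd_prime_iff_eq hp hrp).mp h2).symm
  haveI hcp : CharP K p := hrep ▸ (ringChar.charP K)
  have h2K : (2 : K) ≠ 0 := by
    intro h
    have hd2 : p ∣ 2 := (CharP.cast_eq_zero_iff K p 2).mp (by exact_mod_cast h)
    have : p = 2 := (Nat.prime_dvd_prime_iff_eq hp Nat.prime_two).mp hd2
    rw [this] at hpodd
    have := Nat.odd_iff.mp hpodd
    omega
  haveI : Fact p.Prime := ⟨hp⟩
  have hNodd : Odd (p ^ (2 * k)) := hpodd.pow
  -- key kernel statement
  have key : ∀ z : K, z ^ p ^ (2 * k) + z = 0 → z = 0 := by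
    intro z hz
    have hF : z ^ p ^ (2 * k) = -z := eq_neg_of_add_eq_zero_left hz
    have hiter : ∀ j : ℕ, z ^ p ^ (2 * k * j) = (-1 : K) ^ j * z := by
      intro j
      induction j with
      | zero => simp
      | succ j ih =>
        have hpe : p ^ (2 * k * (j + 1)) = p ^ (2 * k * j) * p ^ (2 * k) := by
          rw [← pow_add]; ring_nf
        rw [hpe, pow_mul, ih, mul_pow, ← pow_mul, mul_comm j, pow_mul, hNodd.neg_one_pow,
          hF, pow_succ]
        ring
    set d := Nat.gcd n (2 * k) with hd
    set m := n / d with hm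
    have hdvd2k : d ∣ 2 * k := Nat.gcd_dvd_right n (2 * k)
    have hdvdn : d ∣ n := Nat.gcd_dvd_left n (2 * k)
    obtain ⟨t, ht⟩ := hdvd2k
    have hmul : 2 * k * m = n * t := by
      rw [hm, ht]
      obtain ⟨s, hs⟩ := hdvdn
      rcases Nat.eq_zero_or_pos d with h0 | h0
      · have : n = 0 := Nat.eq_zero_of_gcd_eq_zero_left (hd ▸ h0)
        omega
      · rw [hs, Nat.mul_div_cancel_left s h0]
        ring
    have hz1 : z ^ p ^ (2 * k * m) = z := by
      rw [hmul, pow_mul, ← hcard]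
      exact FiniteField.pow_card_pow t z
    have : z = -z := by
      have := hiter m
      rw [hz1, hodd.neg_one_pow] at this
      simpa using this
    have h2z : (2 : K) * z = 0 := by linear_combination this
    rcases mul_eq_zero.mp h2z with h | h
    · exact absurd h h2K
    · exact h
  refine ⟨?_, key⟩
  rw [Fintype.bijective_iff_injective_and_card]
  refine ⟨?_, rfl⟩
  intro x y hxy
  simp only at hxy
  have hsub : (x - y) ^ p ^ (2 * k) + (x - y) = 0 := by
    rw [sub_pow_char_pow]
    linear_combination hxy
  have := key _ hsub
  exact sub_eq_zero.mp this
end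

section
/- Let p be an odd prime with p ≡ 1 (mod 4), n odd, q = p^n, and u = -3. For a ∈ F_q* and b ∈ F_q, if η(b + 2a²) = η(b - 2a²) = η(a) (quadratic character conditions of case C_{1,1}), then x = (b + 2a²)/(-4a) satisfies: both x and x+a are nonzero squares or both nonsquares according to η(a), and (x+a)²(η(x+a) - 3) - x²(η(x) - 3) = b. -/
/-- Case `C_{1,1}` for `u = -3`, `q ≡ 1 (mod 4)`: under the quadratic-character
conditions, `x = (b + 2a²)/(-4a)` is a genuine solution of the differential equation. -/
theorem stmt18 {K : Type*} [Field K] [Fintype K] (p n : ℕ) (hp : p.Prime)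
    (hp1 : p % 4 = 1) (hn : Odd n) (hcard : Fintype.card K = p ^ n)
    (a : K) (ha : a ≠ 0) (b : K)
    (h1 : (b + 2 * a ^ 2) ^ ((Fintype.card K - 1) / 2)
        = a ^ ((Fintype.card K - 1) / 2))
    (h2 : (b - 2 * a ^ 2) ^ ((Fintype.card K - 1) / 2)
        = a ^ ((Fintype.card K - 1) / 2)) :
    (b + 2 * a ^ 2) / (-4 * a) ≠ 0 ∧ (b + 2 * a ^ 2) / (-4 * a) + a ≠ 0 ∧
    ((IsSquare ((b + 2 * a ^ 2) / (-4 * a)) ∧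
        IsSquare ((b + 2 * a ^ 2) / (-4 * a) + a)) ∨
      (¬ IsSquare ((b + 2 * a ^ 2) / (-4 * a)) ∧
        ¬ IsSquare ((b + 2 * a ^ 2) / (-4 * a) + a))) ∧
    ((b + 2 * a ^ 2) / (-4 * a) + a) ^ 2 *
        (((b + 2 * a ^ 2) / (-4 * a) + a) ^ ((Fintype.card K - 1) / 2) - 3)
      - ((b + 2 * a ^ 2) / (-4 * a)) ^ 2 *
        (((b + 2 * a ^ 2) / (-4 * a)) ^ ((Fintype.card K - 1) / 2) - 3) = b := by
  have hqK := hcard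
  set q := Fintype.card K with hq
  set e := (q - 1) / 2 with he
  have hp5 : 5 ≤ p := by have := hp.two_le; omega
  have hq5 : 5 ≤ q := by
    calc 5 ≤ p := hp5
    _ ≤ p ^ n := Nat.le_self_pow hn.pos.ne' p
    _ = q := hqK.symm
  -- characteristic
  have hcast : (q : K) = 0 := by
    simpa [hq] using FiniteField.cast_card_eq_zero K
  have hpK : (p : K) = 0 := by
    have : ((p : K)) ^ n = 0 := by push_cast at hcast ⊢; rw [← hcast, hqK]; push_cast; ring
    exact pow_eq_zero_iff hn.pos.ne' |>.mp this
  have hchar : ringChar K = p := by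
    have hdvd : ringChar K ∣ p := (ringChar.spec K p).mp hpK
    have hprime : (ringChar K).Prime := CharP.char_is_prime K (ringChar K)
    rcases (Nat.Prime.eq_one_or_self_of_dvd hp _ hdvd) with h | h
    · exact absurd h hprime.one_lt.ne'
    · exact h
  have hchar2 : ringChar K ≠ 2 := by rw [hchar]; omega
  have h2K : (2 : K) ≠ 0 := Ring.two_ne_zero hchar2
  have h4K : (4 : K) ≠ 0 := by
    have : (4 : K) = 2 * 2 := by norm_num
    rw [this]; exact mul_ne_zero h2K h2K
  have h4a : (-4 * a : K) ≠ 0 := by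
    exact mul_ne_zero (neg_ne_zero.mpr h4K) ha
  -- q ≡ 1 mod 4
  have hq4 : q % 4 = 1 := by
    rw [hqK, Nat.pow_mod, hp1, Nat.one_pow, Nat.one_mod_eq_one.mpr (by norm_num)]
  have heven : Even e := by
    refine ⟨(q - 1) / 4, ?_⟩; omega
  have h2e : 2 * e = q - 1 := by omega
  have hepos : e ≠ 0 := by omega
  -- nonvanishing of b ± 2a²
  have hae : a ^ e ≠ 0 := pow_ne_zero e ha
  have hb1 : b + 2 * a ^ 2 ≠ 0 := by
    intro h; rw [h, zero_pow hepos] at h1; exact hae h1.symm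
  have hb2 : b - 2 * a ^ 2 ≠ 0 := by
    intro h; rw [h, zero_pow hepos] at h2; exact hae h2.symm
  set x := (b + 2 * a ^ 2) / (-4 * a) with hx
  have hxne : x ≠ 0 := div_ne_zero hb1 h4a
  have hxa : x + a = (b - 2 * a ^ 2) / (-4 * a) := by
    rw [hx]; field_simp; ring
  have hxane : x + a ≠ 0 := by rw [hxa]; exact div_ne_zero hb2 h4a
  -- (-4a)^e = a^e
  have h2q : (2 : K) ^ (q - 1) = 1 := by
    simpa [hq] using FiniteField.pow_card_sub_one_eq_one (2 : K) h2K
  have h4e : (4 : K) ^ e = 1 := by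
    have : (4 : K) = 2 ^ 2 := by norm_num
    rw [this, ← pow_mul, h2e, h2q]
  have hneg4a : (-4 * a : K) ^ e = a ^ e := by
    rw [show (-4 * a : K) = -1 * 4 * a by ring, mul_pow, mul_pow,
      heven.neg_one_pow, h4e]
    ring
  have hxe : x ^ e = 1 := by
    rw [hx, div_pow, h1, hneg4a, div_self hae]
  have hxae : (x + a) ^ e = 1 := by
    rw [hxa, div_pow, h2, hneg4a, div_self hae]
  -- squares
  have hsq : ∀ y : K, y ≠ 0 → y ^ e = 1 → IsSquare y := by
    intro y hy hye
    rw [FiniteField.isSquare_iff hchar2 hy]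
    have : q / 2 = e := by omega
    rw [this]; exact hye
  refine ⟨hxne, hxane, Or.inl ⟨hsq x hxne hxe, hsq (x + a) hxane hxae⟩, ?_⟩
  rw [hxe, hxae]
  rw [hxa, hx]
  field_simp
  ring
end

section
/- Let q be an odd prime power, Q = q^m an extension, and consider the equation X^(q+1) + X + A = 0 over F_Q. If the equation has more than 2 roots in F_Q then A ≠ 0, and the number of roots in F_Q is 0, 1, 2, or p^d + 1 where d = gcd of the relevant degrees; in particular, the map X ↦ X^(q+1) + X cannot take any value more than q + 1 times on F_Q. -/
open Polynomial

theorem dvdlem {K : Type*} [Field K] (p k : ℕ) [CharP K p] (hp : p.Prime) (j : ℕ) (hj : j ≠ 0) :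
    (X ^ p ^ k - X : K[X]) ∣ (X ^ (p ^ k) ^ j - X) := by
  haveI : Fact p.Prime := ⟨hp⟩
  induction j with
  | zero => exact absurd rfl hj
  | succ n ih =>
    rcases Nat.eq_zero_or_pos n with hn | hn
    · subst hn; simp
    · have h0 : (X ^ (p ^ k) ^ n - X : K[X]) ^ p ^ k
          = (X ^ (p ^ k) ^ n) ^ p ^ k - X ^ p ^ k :=
        sub_pow_char_pow (X ^ (p ^ k) ^ n) X k
      have e : ((p : ℕ) ^ k) ^ (n + 1) = (p ^ k) ^ n * p ^ k := pow_succ _ _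
      have h1 : (X ^ (p ^ k) ^ (n + 1) - X : K[X]) =
          (X ^ (p ^ k) ^ n - X) ^ p ^ k + (X ^ p ^ k - X) := by
        rw [e, pow_mul, h0]; ring
      rw [h1]
      exact dvd_add (Dvd.dvd.pow (ih hn.ne') (Nat.pow_pos hp.pos).ne') dvd_rfl

theorem fixlem {K : Type*} [Field K] [Fintype K] (p k m : ℕ) [CharP K p] (hp : p.Prime)
    (hk : k ≠ 0) (hm : m ≠ 0) (hcard : Fintype.card K = (p ^ k) ^ m) :
    ({l : K | l ^ p ^ k = l}).ncard = p ^ k := by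
  classical
  haveI : Fact p.Prime := ⟨hp⟩
  have hq1 : 1 < p ^ k := Nat.one_lt_pow hk hp.one_lt
  set F : K[X] := X ^ p ^ k - X with hF
  have hFne : F ≠ 0 := FiniteField.X_pow_card_sub_X_ne_zero K hq1
  have hdvd : F ∣ (X ^ (p ^ k) ^ m - X : K[X]) := dvdlem p k hp m hm
  obtain ⟨H, hH⟩ := hdvd
  set G : K[X] := X ^ (p ^ k) ^ m - X with hG
  have hGroots : G.roots = Finset.univ.val := by
    have := FiniteField.roots_X_pow_card_sub_X K
    rwa [hcard] at this
  have hGne : G ≠ 0 := FiniteField.X_pow_card_sub_X_ne_zero K (Nat.one_lt_pow hm hq1)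
  have hHne : H ≠ 0 := fun h => hGne (by rw [hH, h, mul_zero])
  have hdegF : F.natDegree = p ^ k := FiniteField.X_pow_card_sub_X_natDegree_eq K hq1
  have hdegG : G.natDegree = (p ^ k) ^ m :=
    FiniteField.X_pow_card_sub_X_natDegree_eq K (Nat.one_lt_pow hm hq1)
  have hsum : F.natDegree + H.natDegree = (p ^ k) ^ m := by
    rw [← hdegG, hH, Polynomial.natDegree_mul hFne hHne]
  have hrootsG : G.roots = F.roots + H.roots := by rw [hH, Polynomial.roots_mul (hH ▸ hGne)]
  have hcardG : Multiset.card G.roots = (p ^ k) ^ m := by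
    rw [hGroots]; simpa using hcard
  have hFle : Multiset.card F.roots ≤ p ^ k := hdegF ▸ Polynomial.card_roots' F
  have hHle : Multiset.card H.roots ≤ H.natDegree := Polynomial.card_roots' H
  have hFcard : Multiset.card F.roots = p ^ k := by
    have := hcardG
    rw [hrootsG, Multiset.card_add] at this
    omega
  have hnodup : F.roots.Nodup := by
    have : F.roots ≤ G.roots := hrootsG ▸ Multiset.le_add_right _ _
    exact Multiset.nodup_of_le this (hGroots ▸ Finset.univ.nodup)
  have hset : {l : K | l ^ p ^ k = l} = ↑F.roots.toFinset := by
    ext l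
    simp only [Set.mem_setOf_eq, Finset.coe_sort_coe, Multiset.mem_toFinset, Finset.mem_coe,
      Polynomial.mem_roots hFne, Polynomial.IsRoot.def, hF]
    simp [sub_eq_zero]
    exact fun _ => sub_ne_zero.mp hFne
  rw [hset, Set.ncard_coe_finset, Multiset.toFinset_card_of_nodup hnodup, hFcard]

theorem afflem {K : Type*} [Field K] [Fintype K] (p k m : ℕ) [CharP K p] (hp : p.Prime)
    (hk : k ≠ 0) (hm : m ≠ 0) (hcard : Fintype.card K = (p ^ k) ^ m)
    (a b : K) (ha : a ≠ 0) :
    ({w : K | a * w ^ p ^ k + b * w + 1 = 0}).ncard ∈ ({0, 1, p ^ k} : Set ℕ) := by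
  classical
  haveI : Fact p.Prime := ⟨hp⟩
  set q := p ^ k with hq
  set S := {w : K | a * w ^ q + b * w + 1 = 0} with hS
  rcases Set.eq_empty_or_nonempty S with h | ⟨w1, hw1⟩
  · left; simp [h]
  right
  set ker := {w : K | a * w ^ q + b * w = 0} with hker
  have hw1' : a * w1 ^ q + b * w1 + 1 = 0 := hw1
  have hSeq : S = (fun w => w1 + w) '' ker := by
    ext w'
    constructor
    · intro hw'
      refine ⟨w' - w1, ?_, by ring⟩
      have hw'' : a * w' ^ q + b * w' + 1 = 0 := hw'
      have hsub : (w' - w1) ^ q = w' ^ q - w1 ^ q := sub_pow_char_pow w' w1 k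
      show a * (w' - w1) ^ q + b * (w' - w1) = 0
      rw [hsub]; linear_combination hw'' - hw1'
    · rintro ⟨w, hw, rfl⟩
      have hw' : a * w ^ q + b * w = 0 := hw
      have hadd : (w1 + w) ^ q = w1 ^ q + w ^ q := add_pow_char_pow w1 w p k
      show a * (w1 + w) ^ q + b * (w1 + w) + 1 = 0
      rw [hadd]; linear_combination hw1' + hw'
  have hcard1 : S.ncard = ker.ncard := by
    rw [hSeq, Set.ncard_image_of_injective _ (add_right_injective w1)]
  by_cases hker0 : ker = {0}
  · left; rw [hcard1, hker0]; simp
  right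
  -- ker has a nonzero element
  have hq0 : q ≠ 0 := (Nat.pow_pos hp.pos).ne'
  have h0mem : (0 : K) ∈ ker := by
    show a * (0:K) ^ q + b * 0 = 0
    rw [zero_pow hq0]; ring
  obtain ⟨w0, hw0k, hw0⟩ : ∃ w0 ∈ ker, w0 ≠ 0 := by
    by_contra hcon
    push_neg at hcon
    exact hker0 (Set.eq_singleton_iff_unique_mem.2 ⟨h0mem, fun w hw => hcon w hw⟩)
  have hw0' : a * w0 ^ q + b * w0 = 0 := hw0k
  have hkerEq : ker = (fun l => l * w0) '' {l : K | l ^ q = l} := by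
    ext w
    constructor
    · intro hw
      have hw' : a * w ^ q + b * w = 0 := hw
      refine ⟨w / w0, ?_, by field_simp⟩
      show (w / w0) ^ q = w / w0
      have key : w ^ q * w0 = w * w0 ^ q := by
        have h1 : a * (w ^ q * w0) = -(b * w * w0) := by linear_combination w0 * hw'
        have h2 : a * (w * w0 ^ q) = -(b * w * w0) := by linear_combination w * hw0'
        have := h1.trans h2.symm
        exact mul_left_cancel₀ ha this
      rw [div_pow, div_eq_div_iff (pow_ne_zero _ hw0) hw0]
      linear_combination key
    · rintro ⟨l, hl, rfl⟩
      have hl' : l ^ q = l := hl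
      show a * (l * w0) ^ q + b * (l * w0) = 0
      rw [mul_pow, hl']
      linear_combination l * hw0'
  rw [hcard1, hkerEq, Set.ncard_image_of_injective _ (mul_left_injective₀ hw0)]
  exact Set.mem_singleton_iff.2 (fixlem p k m hp hk hm hcard)

theorem frobbij {K : Type*} [Field K] [Fintype K] (p k : ℕ) [CharP K p] (hp : p.Prime) :
    Function.Bijective (fun x : K => x ^ p ^ k) := by
  haveI : Fact p.Prime := ⟨hp⟩
  have hinj : Function.Injective (fun x : K => x ^ p ^ k) := by
    intro x y hxy
    have h1 : (x - y) ^ p ^ k = 0 := by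
      rw [sub_pow_char_pow x y k]
      simp only at hxy
      rw [hxy, sub_self]
    have h2 : x - y = 0 := pow_eq_zero_iff (Nat.pow_pos hp.pos).ne' |>.mp h1
    exact sub_eq_zero.mp h2
  exact ⟨hinj, Finite.surjective_of_injective hinj⟩

theorem twolem {K : Type*} [Field K] [Fintype K] (p k : ℕ) [CharP K p] (hp : p.Prime) :
    ({x : K | x ^ (p ^ k + 1) + x + 0 = 0}).ncard = 2 := by
  classical
  haveI : Fact p.Prime := ⟨hp⟩
  set q := p ^ k with hq
  have hqne : q ≠ 0 := (Nat.pow_pos hp.pos).ne'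
  obtain ⟨hinj, hsurj⟩ := frobbij p k (K := K) hp
  obtain ⟨y0, hy0⟩ := hsurj (-1 : K)
  have hy0' : y0 ^ q = -1 := hy0
  have hy0ne : y0 ≠ 0 := by
    intro h
    rw [h, zero_pow hqne] at hy0'
    exact (one_ne_zero : (1:K) ≠ 0) (by linear_combination hy0')
  have hset : {x : K | x ^ (q + 1) + x + 0 = 0} = {0, y0} := by
    ext x
    simp only [Set.mem_setOf_eq, Set.mem_insert_iff, Set.mem_singleton_iff, add_zero]
    constructor
    · intro hx
      have : x * (x ^ q + 1) = 0 := by linear_combination hx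
      rcases mul_eq_zero.mp this with h | h
      · left; exact h
      · right
        apply hinj
        show x ^ q = y0 ^ q
        rw [hy0']
        linear_combination h
    · rintro (rfl | h)
      · rw [zero_pow (Nat.succ_ne_zero q)]; ring
      · have h3 : y0 ^ (q + 1) = y0 ^ q * y0 := pow_succ y0 q
        rw [h, h3, hy0']; ring
  rw [hset, Set.ncard_pair (Ne.symm hy0ne)]

theorem mainlem {K : Type*} [Field K] [Fintype K] (p k m : ℕ) [CharP K p] (hp : p.Prime)
    (hk : k ≠ 0) (hm : m ≠ 0) (hcard : Fintype.card K = (p ^ k) ^ m) (A : K) :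
    ({x : K | x ^ (p ^ k + 1) + x + A = 0}).ncard ∈ ({0, 1, 2, p ^ k + 1} : Set ℕ) := by
  classical
  haveI : Fact p.Prime := ⟨hp⟩
  set q := p ^ k with hq
  have hqne : q ≠ 0 := (Nat.pow_pos hp.pos).ne'
  set S := {x : K | x ^ (q + 1) + x + A = 0} with hS
  rcases Set.eq_empty_or_nonempty S with h | ⟨x0, hx0⟩
  · left; simp [h]
  by_cases hA : A = 0
  · right; right; left
    rw [hS, hA]
    exact twolem p k hp
  right
  have hx0' : x0 ^ (q + 1) + x0 + A = 0 := hx0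
  have ha : x0 ^ q + 1 ≠ 0 := by
    intro h
    apply hA
    have e : x0 ^ (q + 1) + x0 + A = 0 := hx0'
    rw [pow_succ] at e
    linear_combination e - x0 * h
  -- Now A ≠ 0, x0 is a root, a := x0^q + 1 ≠ 0
  set Sw := {w : K | (x0 ^ q + 1) * w ^ q + x0 * w + 1 = 0} with hSw
  have hSwne : ∀ w ∈ Sw, w ≠ 0 := by
    intro w hw h0
    have hw' : (x0 ^ q + 1) * w ^ q + x0 * w + 1 = 0 := hw
    rw [h0, zero_pow hqne] at hw'
    simp at hw'
  have hSeq : S = insert x0 ((fun w => x0 + w⁻¹) '' Sw) := by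
    ext x
    simp only [Set.mem_insert_iff, Set.mem_image]
    constructor
    · intro hx
      by_cases hxx0 : x = x0
      · left; exact hxx0
      right
      have hx' : x ^ (q + 1) + x + A = 0 := hx
      set u := x - x0 with hu
      have hu0 : u ≠ 0 := sub_ne_zero.mpr hxx0
      refine ⟨u⁻¹, ?_, ?_⟩
      · show (x0 ^ q + 1) * (u⁻¹) ^ q + x0 * u⁻¹ + 1 = 0
        have hxq : x ^ q = x0 ^ q + u ^ q := by
          rw [hu]
          have := add_pow_char_pow (x - x0) x0 p k
          rw [sub_add_cancel] at this
          linear_combination this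
        have hxe : x = x0 + u := by rw [hu]; ring
        have he : x0 ^ q * u + x0 * u ^ q + u ^ (q+1) + u = 0 := by
          have h1 : x ^ (q+1) = x ^ q * x := pow_succ x q
          have h2 : x0 ^ (q+1) = x0 ^ q * x0 := pow_succ x0 q
          have h3 : u ^ (q+1) = u ^ q * u := pow_succ u q
          rw [h1, hxq, hxe] at hx'
          rw [h2] at hx0'
          rw [h3]
          linear_combination hx' - hx0'
        have hw1' : u * u⁻¹ = 1 := mul_inv_cancel₀ hu0
        have hw2' : u ^ q * (u⁻¹) ^ q = 1 := by
          rw [← mul_pow, hw1', one_pow]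
        linear_combination ((u⁻¹) ^ q * u⁻¹) * he -
          (x0 ^ q * (u⁻¹) ^ q + u ^ q * (u⁻¹) ^ q + (u⁻¹) ^ q) * hw1' -
          (x0 * u⁻¹ + 1) * hw2'
      · rw [inv_inv, hu]; ring
    · rintro (rfl | ⟨w, hw, rfl⟩)
      · exact hx0
      have hw' : (x0 ^ q + 1) * w ^ q + x0 * w + 1 = 0 := hw
      have hw0 : w ≠ 0 := hSwne w hw
      show (x0 + w⁻¹) ^ (q + 1) + (x0 + w⁻¹) + A = 0
      have hadd : (x0 + w⁻¹) ^ q = x0 ^ q + (w⁻¹) ^ q := add_pow_char_pow x0 w⁻¹ p k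
      have hpow : (x0 + w⁻¹) ^ (q + 1) = (x0 ^ q + (w⁻¹) ^ q) * (x0 + w⁻¹) := by
        rw [pow_succ, hadd]
      rw [hpow]
      have hx0c : x0 ^ q * x0 + x0 + A = 0 := by
        have := hx0'
        rwa [pow_succ] at this
      have hw1' : w * w⁻¹ = 1 := mul_inv_cancel₀ hw0
      have hw2' : w ^ q * (w⁻¹) ^ q = 1 := by
        rw [← mul_pow, hw1', one_pow]
      linear_combination hx0c + ((w⁻¹) ^ q * w⁻¹) * hw' -
        ((x0 ^ q + 1) * w⁻¹) * hw2' - (x0 * (w⁻¹) ^ q) * hw1'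
  -- count
  have hx0notmem : x0 ∉ (fun w => x0 + w⁻¹) '' Sw := by
    rintro ⟨w, hw, hweq⟩
    have hw0 : w ≠ 0 := hSwne w hw
    have : w⁻¹ = 0 := by linear_combination hweq
    exact hw0 (inv_eq_zero.mp this)
  have hinj : Set.InjOn (fun w => x0 + w⁻¹) Sw := by
    intro w1 h1 w2 h2 heq
    have : w1⁻¹ = w2⁻¹ := by
      simpa using heq
    exact inv_injective this
  have hcount : S.ncard = 1 + Sw.ncard := by
    rw [hSeq, Set.ncard_insert_of_notMem hx0notmem (Set.toFinite _),
      Set.ncard_image_of_injOn hinj]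
    ring
  have haff : Sw.ncard ∈ ({0, 1, p ^ k} : Set ℕ) :=
    afflem p k m hp hk hm hcard (x0 ^ q + 1) x0 ha
  simp only [Set.mem_insert_iff, Set.mem_singleton_iff] at haff ⊢
  rcases haff with h | h | h
  · left; rw [hcount, h]
  · right; left; rw [hcount, h]
  · right; right; rw [hcount, h]; exact Nat.add_comm 1 (p ^ k)

/-- Root counts for `X^(q+1) + X + A` over an extension `F_Q` of `F_q`, `q = p^k`,
`Q = q^m`: more than two roots forces `A ≠ 0`, the number of roots lies in
`{0, 1, 2, p^d + 1}` with `d = gcd(k, km)`, and no fiber of `X ↦ X^(q+1) + X`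
has more than `q + 1` elements. -/
theorem stmt19 {K : Type*} [Field K] [Fintype K] (p k m : ℕ) (hp : p.Prime)
    (hpodd : Odd p) (hcard : Fintype.card K = (p ^ k) ^ m) (A : K) :
    (2 < ({x : K | x ^ (p ^ k + 1) + x + A = 0}).ncard → A ≠ 0) ∧
    ({x : K | x ^ (p ^ k + 1) + x + A = 0}).ncard ∈
      ({0, 1, 2, p ^ Nat.gcd k (k * m) + 1} : Set ℕ) ∧
    ∀ c : K, ({x : K | x ^ (p ^ k + 1) + x = c}).ncard ≤ p ^ k + 1 := by
  classical
  have h1K : 1 < Fintype.card K := Fintype.one_lt_card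
  have hk : k ≠ 0 := by
    rintro rfl
    rw [pow_zero, one_pow] at hcard
    omega
  have hm : m ≠ 0 := by
    rintro rfl
    rw [pow_zero] at hcard
    omega
  -- characteristic
  have hchar : CharP K p := by
    obtain ⟨n, hrp, hrc⟩ := FiniteField.card K (ringChar K)
    have heq : (ringChar K) ^ (n : ℕ) = p ^ (k * m) := by
      rw [← hrc, hcard, pow_mul]
    have hpdvd : p ∣ ringChar K := by
      have : p ∣ (ringChar K) ^ (n : ℕ) := by
        rw [heq]
        exact dvd_pow_self p (by positivity)
      exact hp.dvd_of_dvd_pow this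
    have : p = ringChar K := ((Nat.prime_dvd_prime_iff_eq hp hrp).mp hpdvd)
    rw [this]
    infer_instance
  haveI := hchar
  have hgcd : Nat.gcd k (k * m) = k := Nat.gcd_eq_left (dvd_mul_right k m)
  have hpk1 : 1 ≤ p ^ k := Nat.one_le_pow k p hp.pos
  have main := mainlem p k m hp hk hm hcard A
  refine ⟨?_, ?_, ?_⟩
  · intro h2 hA0
    rw [hA0] at h2
    rw [twolem p k hp] at h2
    exact absurd h2 (lt_irrefl 2)
  · rwa [hgcd]
  · intro c
    have hset : {x : K | x ^ (p ^ k + 1) + x = c} = {x : K | x ^ (p ^ k + 1) + x + (-c) = 0} := by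
      ext x
      simp only [Set.mem_setOf_eq]
      constructor
      · intro h; rw [h]; ring
      · intro h; linear_combination h
    rw [hset]
    have := mainlem p k m hp hk hm hcard (-c)
    simp only [Set.mem_insert_iff, Set.mem_singleton_iff] at this
    rcases this with h | h | h | h <;> rw [h] <;> omega
end
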